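/- arXiv:1405.4267 — 2 statements merged into one kernel-verified Lean document; each statement's English description precedes it below -/
import Mathlib

section
/- Let X be a pointed compact metric space (with base point 0) and φ : X → X a continuous map that is not supercontractive. Then there exist ε > 0, sequences (xₙ), (yₙ) in X converging to a common point x₀ ∈ X with 0 < d(xₙ, yₙ) < 1/n and d(φ(xₙ), φ(yₙ))/d(xₙ, yₙ) > ε for all n, and a Lipschitz function f : X → ℝ with f(0) = 0 such that f(φ(xₙ)) = d(φ(xₙ), φ(yₙ)) and f(φ(yₙ)) = 0 for all n. -/
/-!
Pick pairs `xₙ, yₙ` at distance `< 1/(n+1)` whose images are stretched by a factor `> ε`, pass to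
a subsequence along which `xₙ → x₀` (hence also `yₙ → x₀`), and order each pair so that `φ xₙ`
is at least as far from `p = φ x₀` as `φ yₙ`; then `Dₙ = d(φ xₙ, φ yₙ) ≤ 2 d(φ xₙ, p)`.
Thinning the sequence further so that the distances `d(φ xₙ, p)` at least halve at each step and
so that every `φ xₖ` stays `Dₖ/4`-far from `e` and from all earlier `φ yₙ`, the bumps
`z ↦ max 0 (Dₖ - 4 d(z, φ xₖ))` have disjoint supports avoiding `e` and every `φ yₙ`;
their supremum is the required `4`-Lipschitz function.
-/

open Filter Topology Set
open scoped NNReal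

/-- A map between metric spaces is supercontractive if
`lim_{d(x,y)→0} d(f x, f y)/d(x,y) = 0`. -/
def IsSupercontractive {X Y : Type*} [MetricSpace X] [MetricSpace Y] (f : X → Y) : Prop :=
  ∀ ε > (0 : ℝ), ∃ δ > (0 : ℝ), ∀ x y : X,
    0 < dist x y → dist x y < δ → dist (f x) (f y) / dist x y < ε

theorem exists_seq_of_not_isSupercontractive {X Y : Type*} [MetricSpace X] [MetricSpace Y]
    {f : X → Y} (h : ¬ IsSupercontractive f) :
    ∃ ε > (0 : ℝ), ∃ x y : ℕ → X, ∀ n : ℕ, 0 < dist (x n) (y n) ∧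
      dist (x n) (y n) < 1 / (n + 1) ∧ ε < dist (f (x n)) (f (y n)) / dist (x n) (y n) := by
  unfold IsSupercontractive at h
  push Not at h
  obtain ⟨ε, hε, hpairs⟩ := h
  have hpair (n : ℕ) : ∃ x y : X, 0 < dist x y ∧ dist x y < 1 / (n + 1) ∧
      ε / 2 < dist (f x) (f y) / dist x y := by
    obtain ⟨x, y, hpos, hlt, hle⟩ := hpairs (1 / (n + 1)) Nat.one_div_pos_of_nat
    exact ⟨x, y, hpos, hlt, by linarith⟩
  choose x y hxy using hpair
  exact ⟨ε / 2, half_pos hε, x, y, hxy⟩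

theorem tendsto_of_forall_eq_or_eq {ι α : Type*} [TopologicalSpace α] {l : Filter ι}
    {x y z : ι → α} {a : α} (hx : Tendsto x l (𝓝 a)) (hy : Tendsto y l (𝓝 a))
    (hz : ∀ i, z i = x i ∨ z i = y i) : Tendsto z l (𝓝 a) := by
  refine tendsto_nhds.2 fun s hs has => ?_
  filter_upwards [tendsto_nhds.1 hx s hs has, tendsto_nhds.1 hy s hs has] with i hxi hyi
  show z i ∈ s
  rcases hz i with h | h <;> rw [h] <;> assumption

theorem exists_swap_le {ι α β : Type*} [LinearOrder β] (g : α → β) (x y : ι → α) :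
    ∃ x' y' : ι → α, (∀ i, x' i = x i ∧ y' i = y i ∨ x' i = y i ∧ y' i = x i) ∧
      ∀ i, g (y' i) ≤ g (x' i) := by
  have hswap (i : ι) : ∃ a b : α, (a = x i ∧ b = y i ∨ a = y i ∧ b = x i) ∧ g b ≤ g a :=
    (le_total (g (x i)) (g (y i))).elim (fun h => ⟨y i, x i, Or.inr ⟨rfl, rfl⟩, h⟩)
      (fun h => ⟨x i, y i, Or.inl ⟨rfl, rfl⟩, h⟩)
  choose x' y' hxy hle using hswap
  exact ⟨x', y', hxy, hle⟩

/-- Passing to `n ↦ ∀ i ≤ n, Q i m` lets each new index be chosen from the previous one alone. -/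
theorem extraction_forall_lt_of_eventually {P : ℕ → Prop} {Q : ℕ → ℕ → Prop}
    (hP : ∀ᶠ m in atTop, P m) (hQ : ∀ n, ∀ᶠ m in atTop, Q n m) :
    ∃ τ : ℕ → ℕ, StrictMono τ ∧ (∀ k, P (τ k)) ∧ ∀ j k, j < k → Q (τ j) (τ k) := by
  have hnext (n : ℕ) : ∃ m, n < m ∧ P m ∧ ∀ i ≤ n, Q i m :=
    ((eventually_gt_atTop n).and
      (hP.and ((finite_Iic n).eventually_all.2 fun i _ => hQ i))).exists
  choose g hgt hP' hQ' using hnext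
  set τ : ℕ → ℕ := fun k => g^[k + 1] 0
  have hτ (k : ℕ) : τ k = g (g^[k] 0) := Function.iterate_succ_apply' g k 0
  have hmono : StrictMono τ := strictMono_nat_of_lt_succ fun k => (hτ (k + 1)) ▸ hgt (τ k)
  refine ⟨τ, hmono, fun k => hτ k ▸ hP' _, fun j k hjk => ?_⟩
  obtain ⟨k, rfl⟩ := Nat.exists_eq_add_of_lt hjk
  exact (hτ (j + k + 1)) ▸ hQ' _ _ (hmono.monotone (Nat.le_add_right j k))

theorem exists_lipschitzWith_of_separated {Y : Type*} [PseudoMetricSpace Y] (K : ℝ≥0)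
    (a : ℕ → Y) (D : ℕ → ℝ) (Z : Set Y) (hD : ∀ n, 0 ≤ D n) (hbdd : BddAbove (range D))
    (ha : Pairwise fun n k => D k ≤ K * dist (a n) (a k))
    (hZ : ∀ z ∈ Z, ∀ k, D k ≤ K * dist z (a k)) :
    ∃ f : Y → ℝ, LipschitzWith K f ∧ (∀ n, f (a n) = D n) ∧ ∀ z ∈ Z, f z = 0 := by
  set bump : ℕ → Y → ℝ := fun k z => max 0 (D k - K * dist z (a k)) with hbump
  obtain ⟨C, hC⟩ := hbdd
  have hbump_bdd (z : Y) : BddAbove (range fun k => bump k z) := by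
    refine ⟨C, forall_mem_range.2 fun k => max_le ((hD 0).trans (hC (mem_range_self 0))) ?_⟩
    have : 0 ≤ (K : ℝ) * dist z (a k) := by positivity
    linarith [hC (mem_range_self k)]
  have hbump_eq_zero {k : ℕ} {z : Y} (h : D k ≤ K * dist z (a k)) : bump k z = 0 :=
    max_eq_left (by linarith)
  have hbump_le (k : ℕ) (z w : Y) : bump k z ≤ bump k w + K * dist z w := by
    have hK : (K : ℝ) * dist w (a k) ≤ K * dist z w + K * dist z (a k) := by
      rw [← mul_add]
      exact mul_le_mul_of_nonneg_left (dist_triangle_left w (a k) z) K.2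
    have : (0 : ℝ) ≤ K * dist z w := by positivity
    exact max_le (by linarith [le_max_left 0 (D k - K * dist w (a k))])
      (by linarith [le_max_right 0 (D k - K * dist w (a k))])
  refine ⟨fun z => ⨆ k, bump k z, LipschitzWith.of_le_add_mul K fun z w =>
      ciSup_le fun k => (hbump_le k z w).trans (by gcongr; exact le_ciSup (hbump_bdd w) k),
    fun n => le_antisymm (ciSup_le fun k => ?_) ?_, fun z hz => ?_⟩
  · rcases eq_or_ne n k with rfl | hnk
    · simp [hbump, hD n]
    · rw [hbump_eq_zero (ha hnk)]
      exact hD n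
  · refine le_ciSup_of_le (hbump_bdd (a n)) n ?_
    simp [hbump, hD n]
  · simp only [hbump_eq_zero (hZ z hz _), ciSup_const]

section Separation

variable {Y : Type*} [PseudoMetricSpace Y]

theorem dist_le_two_mul_dist_of_dist_le_half {p q a : Y} (h : dist q p ≤ dist a p / 2) :
    dist a p ≤ 2 * dist q a := by
  linarith [dist_triangle a q p, dist_comm a q]

variable {a b : ℕ → Y} {p : Y}

theorem eventually_dist_le_four_mul_dist (ha : Tendsto a atTop (𝓝 p))
    (hfar : ∀ n, dist (b n) p ≤ dist (a n) p) (q : Y) :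
    ∀ᶠ m in atTop, dist (a m) (b m) ≤ 4 * dist q (a m) := by
  have hD (m : ℕ) : dist (a m) (b m) ≤ 2 * dist (a m) p := by
    linarith [dist_triangle_right (a m) (b m) p, hfar m]
  rcases (dist_nonneg (x := q) (y := p)).eq_or_lt with hq | hq
  · refine Eventually.of_forall fun m => ?_
    linarith [dist_triangle (a m) q p, dist_comm q (a m), dist_nonneg (x := a m) (y := p), hD m]
  · filter_upwards [(tendsto_iff_dist_tendsto_zero.1 ha).eventually (ge_mem_nhds (half_pos hq))]
      with m hm
    linarith [dist_le_two_mul_dist_of_dist_le_half hm, dist_comm q (a m), hD m]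

theorem exists_strictMono_separated (e : Y) (ha : Tendsto a atTop (𝓝 p))
    (hab : ∀ n, 0 < dist (a n) (b n)) (hfar : ∀ n, dist (b n) p ≤ dist (a n) p) :
    ∃ τ : ℕ → ℕ, StrictMono τ ∧
      (∀ k, dist (a (τ k)) (b (τ k)) ≤ 4 * dist e (a (τ k))) ∧
      (Pairwise fun n k => dist (a (τ k)) (b (τ k)) ≤ 4 * dist (a (τ n)) (a (τ k))) ∧
      ∀ n k, dist (a (τ k)) (b (τ k)) ≤ 4 * dist (b (τ n)) (a (τ k)) := by
  have hD (n : ℕ) : dist (a n) (b n) ≤ 2 * dist (a n) p := by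
    linarith [dist_triangle_right (a n) (b n) p, hfar n]
  have hr := tendsto_iff_dist_tendsto_zero.1 ha
  obtain ⟨τ, hτ, he, hsep⟩ := extraction_forall_lt_of_eventually
    (eventually_dist_le_four_mul_dist ha hfar e)
    (Q := fun n m => dist (a m) p ≤ dist (a n) p / 2 ∧ dist (a m) (b m) ≤ 4 * dist (b n) (a m))
    fun n => (hr.eventually (ge_mem_nhds (by linarith [hab n, hD n]))).and
      (eventually_dist_le_four_mul_dist ha hfar (b n))
  refine ⟨τ, hτ, he, fun n k hnk => ?_, fun n k => ?_⟩
  · rcases hnk.lt_or_gt with h | h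
    · linarith [hD (τ k), (hsep n k h).1, dist_le_two_mul_dist_of_dist_le_half (hsep n k h).1,
        dist_comm (a (τ n)) (a (τ k)),
        dist_nonneg (x := a (τ n)) (y := a (τ k))]
    · linarith [hD (τ k), dist_le_two_mul_dist_of_dist_le_half (hsep k n h).1]
  · rcases lt_trichotomy k n with h | rfl | h
    · have hbn : dist (b (τ n)) p ≤ dist (a (τ k)) p / 2 := (hfar _).trans (hsep k n h).1
      linarith [hD (τ k), dist_le_two_mul_dist_of_dist_le_half hbn]
    · linarith [dist_comm (a (τ k)) (b (τ k)), dist_nonneg (x := a (τ k)) (y := b (τ k))]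
    · exact (hsep n k h).2

theorem exists_strictMono_lipschitzWith_eq_dist (e : Y) (ha : Tendsto a atTop (𝓝 p))
    (hb : Tendsto b atTop (𝓝 p)) (hab : ∀ n, 0 < dist (a n) (b n))
    (hfar : ∀ n, dist (b n) p ≤ dist (a n) p) :
    ∃ τ : ℕ → ℕ, StrictMono τ ∧ ∃ f : Y → ℝ, LipschitzWith 4 f ∧ f e = 0 ∧
      ∀ n, f (a (τ n)) = dist (a (τ n)) (b (τ n)) ∧ f (b (τ n)) = 0 := by
  obtain ⟨τ, hτ, he, haa, hba⟩ := exists_strictMono_separated e ha hab hfar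
  have hbdd : BddAbove (range fun n => dist (a (τ n)) (b (τ n))) :=
    ((ha.dist hb).comp hτ.tendsto_atTop).bddAbove_range
  obtain ⟨f, hf, hfa, hfZ⟩ := exists_lipschitzWith_of_separated 4 (a ∘ τ) _
    (insert e (range (b ∘ τ))) (fun n => dist_nonneg) hbdd haa
    (by rintro z (rfl | ⟨n, rfl⟩) k; exacts [he k, hba n k])
  exact ⟨τ, hτ, f, hf, hfZ e (mem_insert _ _),
    fun n => ⟨hfa n, hfZ _ (mem_insert_of_mem _ ⟨n, rfl⟩)⟩⟩

end Separation

/-- Lemma 1 of the paper: for a continuous non-supercontractive self-map `φ` of a pointed compact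
metric space (base point `e`), there are `ε > 0`, sequences `(xₙ)`, `(yₙ)` converging to a common
point with `0 < d(xₙ,yₙ) < 1/n` and `d(φ xₙ, φ yₙ)/d(xₙ,yₙ) > ε`, and a Lipschitz function `f`
vanishing at `e` with `f (φ xₙ) = d(φ xₙ, φ yₙ)` and `f (φ yₙ) = 0` for all `n`. -/
theorem exists_sequences_and_function_of_not_supercontractive {X : Type*} [MetricSpace X]
    [CompactSpace X] (e : X) (φ : X → X) (hφ : Continuous φ) (h : ¬ IsSupercontractive φ) :
    ∃ ε > (0 : ℝ), ∃ x₀ : X, ∃ x y : ℕ → X,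
      Tendsto x atTop (nhds x₀) ∧ Tendsto y atTop (nhds x₀) ∧
      (∀ n : ℕ, 0 < dist (x n) (y n) ∧ dist (x n) (y n) < 1 / (n + 1) ∧
        ε < dist (φ (x n)) (φ (y n)) / dist (x n) (y n)) ∧
      ∃ f : X → ℝ, (∃ K, LipschitzWith K f) ∧ f e = 0 ∧
        ∀ n : ℕ, f (φ (x n)) = dist (φ (x n)) (φ (y n)) ∧ f (φ (y n)) = 0 := by
  obtain ⟨ε, hε, x, y, hxy⟩ := exists_seq_of_not_isSupercontractive h
  obtain ⟨x₀, -, σ, hσ, hx⟩ := isCompact_univ.tendsto_subseq fun n => mem_univ (x n)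
  have hdist : Tendsto (fun n => dist (x n) (y n)) atTop (𝓝 0) :=
    squeeze_zero (fun n => dist_nonneg) (fun n => (hxy n).2.1.le)
      tendsto_one_div_add_atTop_nhds_zero_nat
  have hy : Tendsto (y ∘ σ) atTop (𝓝 x₀) := hx.congr_dist (hdist.comp hσ.tendsto_atTop)
  obtain ⟨x', y', hswap, hfar⟩ := exists_swap_le (fun z => dist (φ z) (φ x₀)) x y
  have hxy' (n : ℕ) : 0 < dist (x' n) (y' n) ∧ dist (x' n) (y' n) < 1 / (n + 1) ∧
      ε < dist (φ (x' n)) (φ (y' n)) / dist (x' n) (y' n) := by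
    rcases hswap n with ⟨hx', hy'⟩ | ⟨hx', hy'⟩ <;> simpa only [hx', hy', dist_comm] using hxy n
  have hx' : Tendsto (x' ∘ σ) atTop (𝓝 x₀) :=
    tendsto_of_forall_eq_or_eq hx hy fun n => (hswap (σ n)).imp And.left And.left
  have hy' : Tendsto (y' ∘ σ) atTop (𝓝 x₀) :=
    tendsto_of_forall_eq_or_eq hx hy fun n => (hswap (σ n)).symm.imp And.right And.right
  obtain ⟨τ, hτ, f, hf, hfe, hf_eq⟩ := exists_strictMono_lipschitzWith_eq_dist e
    ((hφ.tendsto x₀).comp hx') ((hφ.tendsto x₀).comp hy')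
    (fun n => (div_pos_iff_of_pos_right (hxy' (σ n)).1).1 (hε.trans (hxy' (σ n)).2.2))
    (fun n => hfar (σ n))
  refine ⟨ε, hε, x₀, x' ∘ σ ∘ τ, y' ∘ σ ∘ τ, hx'.comp hτ.tendsto_atTop,
    hy'.comp hτ.tendsto_atTop, fun n => ?_, f, ⟨4, hf⟩, hfe, hf_eq⟩
  obtain ⟨hpos, hlt, hratio⟩ := hxy' (σ (τ n))
  exact ⟨hpos, hlt.trans_le (Nat.one_div_le_one_div ((hσ.comp hτ).id_le n)), hratio⟩
end

section
/- Let X be a metric space, (aₙ) a sequence in X, (rₙ) a sequence of positive reals such that the open balls B(aₙ, rₙ) are pairwise disjoint, and (cₙ) a sequence of reals with 0 ≤ cₙ ≤ 4rₙ. Then the function g(x) = Σₙ cₙ · max{0, 1 - d(x, aₙ)/rₙ} is well defined (at each x at most one summand is nonzero), Lipschitz with constant at most 4, satisfies g(aₙ) = cₙ for all n, and g(x) = 0 for x outside the union of the balls B(aₙ, rₙ). -/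
/-!
Every tent `max 0 (1 - d(x, aₙ)/rₙ)` vanishes off its ball and is `1/rₙ`-Lipschitz, so `cₙ` times
it is `4`-Lipschitz. Disjointness of the balls leaves at most one nonzero summand at each point.
For such a sum of nonnegative functions, `g x` equals a single summand `fₙ x`, while `g y ≥ fₙ y`;
hence `g x - g y ≤ fₙ x - fₙ y ≤ 4 d(x, y)`.
-/

open Metric NNReal

noncomputable section

def tent {X : Type*} [PseudoMetricSpace X] (a : X) (r : ℝ) (x : X) : ℝ :=
  max 0 (1 - dist x a / r)

section Tent

variable {X : Type*} [PseudoMetricSpace X] {a x y : X} {r : ℝ}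

lemma tent_nonneg : 0 ≤ tent a r x := le_max_left _ _

lemma tent_self : tent a r a = 1 := by
  simp [tent]

lemma tent_eq_zero_of_notMem_ball (hr : 0 < r) (hx : x ∉ ball a r) : tent a r x = 0 := by
  rw [mem_ball, not_lt, ← one_le_div hr] at hx
  exact max_eq_left (by linarith)

lemma tent_le_add_dist_div (hr : 0 < r) : tent a r x ≤ tent a r y + dist x y / r := by
  have hdist : dist y a / r ≤ dist x y / r + dist x a / r := by
    rw [← add_div, dist_comm x y]
    gcongr
    exact dist_triangle y x a
  have hy : 1 - dist y a / r ≤ tent a r y := le_max_right _ _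
  exact max_le (add_nonneg tent_nonneg (div_nonneg dist_nonneg hr.le)) (by linarith)

lemma lipschitzWith_const_mul_tent {K : ℝ≥0} {c : ℝ} (hr : 0 < r) (hc₀ : 0 ≤ c)
    (hcK : c ≤ K * r) : LipschitzWith K fun x => c * tent a r x := by
  refine LipschitzWith.of_le_add_mul K fun x y => ?_
  calc c * tent a r x ≤ c * (tent a r y + dist x y / r) :=
        mul_le_mul_of_nonneg_left (tent_le_add_dist_div hr) hc₀
    _ = c * tent a r y + c / r * dist x y := by ring
    _ ≤ c * tent a r y + K * dist x y := by
        gcongr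
        rwa [div_le_iff₀ hr]

end Tent

section AtMostOneNonzero

variable {ι X : Type*} {f : ι → X → ℝ}

lemma exists_tsum_eq_apply_of_subsingleton [Nonempty ι]
    (hf : ∀ x, {n | f n x ≠ 0}.Subsingleton) (x : X) : ∃ n, ∑' k, f k x = f n x := by
  by_cases h : ∃ n, f n x ≠ 0
  · obtain ⟨n, hn⟩ := h
    exact ⟨n, tsum_eq_single n fun m hm => not_not.1 fun hm' => hm (hf x hm' hn)⟩
  · push Not at h
    exact ⟨Classical.arbitrary ι, by simp [h]⟩

lemma apply_le_tsum_of_subsingleton (hf : ∀ x, {n | f n x ≠ 0}.Subsingleton)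
    (hf₀ : ∀ n x, 0 ≤ f n x) (n : ι) (x : X) : f n x ≤ ∑' k, f k x :=
  (summable_of_hasFiniteSupport (hf x).finite).le_tsum n fun k _ => hf₀ k x

lemma lipschitzWith_tsum_of_subsingleton [PseudoMetricSpace X] [Nonempty ι] {K : ℝ≥0}
    (hf : ∀ x, {n | f n x ≠ 0}.Subsingleton) (hf₀ : ∀ n x, 0 ≤ f n x)
    (hK : ∀ n, LipschitzWith K (f n)) : LipschitzWith K fun x => ∑' n, f n x := by
  refine LipschitzWith.of_le_add_mul K fun x y => ?_
  obtain ⟨n, hn⟩ := exists_tsum_eq_apply_of_subsingleton hf x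
  rw [hn]
  linarith [(hK n).le_add_mul x y, apply_le_tsum_of_subsingleton hf hf₀ n y]

end AtMostOneNonzero

end

/-- Sums of tent functions supported on pairwise disjoint balls `B(aₙ, rₙ)`, with heights
`0 ≤ cₙ ≤ 4 rₙ`: the resulting function `g` has at most one nonzero summand at each point,
is Lipschitz with constant `4`, satisfies `g (aₙ) = cₙ`, and vanishes outside the balls. -/
theorem sum_of_tents_on_disjoint_balls {X : Type*} [MetricSpace X] (a : ℕ → X) (r : ℕ → ℝ)
    (hr : ∀ n, 0 < r n)
    (hdisj : Pairwise fun m n => Disjoint (Metric.ball (a m) (r m)) (Metric.ball (a n) (r n)))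
    (c : ℕ → ℝ) (hc : ∀ n, 0 ≤ c n ∧ c n ≤ 4 * r n) :
    (∀ x : X, {n : ℕ | c n * max 0 (1 - dist x (a n) / r n) ≠ 0}.Subsingleton) ∧
    (∀ x y : X, |(∑' n, c n * max 0 (1 - dist x (a n) / r n)) -
        (∑' n, c n * max 0 (1 - dist y (a n) / r n))| ≤ 4 * dist x y) ∧
    (∀ m : ℕ, (∑' n, c n * max 0 (1 - dist (a m) (a n) / r n)) = c m) ∧
    (∀ x : X, x ∉ (⋃ n, Metric.ball (a n) (r n)) →
      (∑' n, c n * max 0 (1 - dist x (a n) / r n)) = 0) := by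
  simp only [show ∀ n x, max 0 (1 - dist x (a n) / r n) = tent (a n) (r n) x from fun _ _ => rfl]
  have hvanish : ∀ n x, x ∉ ball (a n) (r n) → c n * tent (a n) (r n) x = 0 := fun n x hx => by
    rw [tent_eq_zero_of_notMem_ball (hr n) hx, mul_zero]
  have hsupp : ∀ x, {n | c n * tent (a n) (r n) x ≠ 0}.Subsingleton := fun x =>
    (subsingleton_setOfPred_mem_iff_pairwise_disjoint.2 hdisj x).anti fun n hn =>
      not_not.1 fun hx => hn (hvanish n x hx)
  have hlip : LipschitzWith 4 fun x => ∑' n, c n * tent (a n) (r n) x :=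
    lipschitzWith_tsum_of_subsingleton hsupp (fun n x => mul_nonneg (hc n).1 tent_nonneg)
      fun n => lipschitzWith_const_mul_tent (hr n) (hc n).1 (by exact_mod_cast (hc n).2)
  refine ⟨hsupp, fun x y => by simpa [Real.dist_eq] using hlip.dist_le_mul x y,
    fun m => ?_, fun x hx => ?_⟩
  · have hcenter : ∀ n ≠ m, a m ∉ ball (a n) (r n) := fun n hnm ham =>
      Set.disjoint_left.1 (hdisj hnm) ham (mem_ball_self (hr m))
    rw [tsum_eq_single m fun n hnm => hvanish n (a m) (hcenter n hnm)]
    simp [tent_self]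
  · simp only [Set.mem_iUnion, not_exists] at hx
    simp [fun n => hvanish n x (hx n)]
end
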